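/- arXiv:2003.01232 — 7 statements merged into one kernel-verified Lean document; each statement's English description precedes it below -/
import Mathlib

section
/- If Γ is a nonempty compact subset of ℂ and z is an interior point of Γ, then there exist distinct points z₁, z₂ ∈ ∂Γ with z₁ + z₂ = 2z. -/
/-!
Cover the plane by the squares of the grid of mesh `ε` centred at `z`, and let `A` be the finite
set of squares whose centre lies within `ε` of `Γ`; the square at `z` is one of them. A parity
argument on the grid finds a grid point `x` touching a square of `A` and a square outside `A` such
that its mirror image `2 z - x` does too. Both then lie within `2 ε` of `∂Γ`, so the compact set
`∂Γ + ∂Γ` meets every neighbourhood of `2 z`, hence contains `2 z`. The two summands differ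
because `z ∉ ∂Γ`.

For the parity argument suppose no such `x` exists, and let `Q = A ∩ -A`. An edge of the mod 2
boundary of `Q` separates a square of `Q` from one outside `A` ("red", on the frontier of `A`) or
from one outside `-A` ("blue", the mirror image of a red edge), and no vertex meets both colours.
So the red edges alone form a mod 2 cycle, which crosses row `0` an even number of times. But the
red crossings of row `0` are the red and the mirrored blue crossings of its right half, that is,
the crossings of `∂Q` by the ray from `z` to the right: an odd number, as `z ∈ Q` and `Q` is
finite.
-/

open Function Set Pointwise Metric Bornology

theorem finsum_row_eq_zero_of_isCycle {M : Type*} [AddCommGroup M] {v h : ℤ × ℤ → M}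
    (hv : (support v).Finite) (hh : (support h).Finite)
    (hcyc : ∀ i j, v (i, j + 1) - v (i, j) = h (i + 1, j) - h (i, j)) (j : ℤ) :
    ∑ᶠ i, v (i, j) = 0 := by
  have hrow {f : ℤ × ℤ → M} (hf : (support f).Finite) (j : ℤ) :
      HasFiniteSupport fun i => f (i, j) :=
    hf.preimage (Prod.mk_left_injective j).injOn
  have hstep (j : ℤ) : ∑ᶠ i, v (i, j + 1) = ∑ᶠ i, v (i, j) := by
    rw [← sub_eq_zero, ← finsum_sub_distrib (hrow hv _) (hrow hv _)]
    simp_rw [hcyc]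
    rw [finsum_sub_distrib ((hrow hh j).preimage (add_left_injective 1).injOn) (hrow hh j),
      sub_eq_zero]
    exact finsum_comp_equiv (Equiv.addRight 1) (f := fun i => h (i, j))
  obtain ⟨N, hN⟩ := (hv.image Prod.snd).bddAbove
  have hfar {j' : ℤ} (hj' : N < j') : ∑ᶠ i, v (i, j') = 0 :=
    finsum_eq_zero_of_forall_eq_zero fun i => by
      by_contra hne
      exact hj'.not_ge (hN (mem_image_of_mem Prod.snd (show (i, j') ∈ support v from hne)))
  have hshift (k : ℕ) : ∑ᶠ i, v (i, j + k) = ∑ᶠ i, v (i, j) := by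
    induction k with
    | zero => simp
    | succ k ih => rw [Nat.cast_succ, ← add_assoc, hstep, ih]
  rw [← hshift (N + 1 - j).toNat]
  exact hfar (by omega)

theorem sum_Ico_neg_natCast_eq_sum_range {M : Type*} [AddCommMonoid M] (f : ℤ → M) (n : ℕ) :
    ∑ i ∈ Finset.Ico (-(n : ℤ)) n, f i = ∑ k ∈ Finset.range n, (f k + f (-k - 1)) := by
  induction n with
  | zero => simp
  | succ n ih =>
    have hIco : Finset.Ico (-((n + 1 : ℕ) : ℤ)) (n + 1 : ℕ) =
        insert (-(n : ℤ) - 1) (insert (n : ℤ) (Finset.Ico (-(n : ℤ)) n)) := by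
      ext
      simp only [Finset.mem_Ico, Finset.mem_insert]
      push_cast
      omega
    rw [hIco, Finset.sum_insert (by simp), Finset.sum_insert (by simp), ih, Finset.sum_range_succ]
    abel

theorem exists_mem_frontier_dist_le {E : Type*} [NormedAddCommGroup E] [NormedSpace ℝ E]
    [FiniteDimensional ℝ E] {s : Set E} {x y : E} (hx : x ∉ s) (hy : y ∈ s) :
    ∃ y' ∈ frontier s, dist x y' ≤ dist x y := by
  obtain ⟨y', hy', hdist⟩ :=
    exists_mem_frontier_infDist_compl_eq_dist (s := sᶜ) hx (compl_ne_univ.2 ⟨y, hy⟩)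
  rw [frontier_compl, compl_compl] at *
  exact ⟨y', hy', hdist ▸ infDist_le_dist_of_mem hy⟩

section GridParity

/-- In doubled coordinates, where grid squares are indexed by `c` and have centre `2 • c`, the
point `p` (a centre, edge midpoint or vertex) lies in the closed square `c`. -/
def Touches (p c : ℤ × ℤ) : Prop := |p.1 - 2 * c.1| ≤ 1 ∧ |p.2 - 2 * c.2| ≤ 1

lemma touches_iff {p c : ℤ × ℤ} :
    Touches p c ↔
      p.1 ≤ 2 * c.1 + 1 ∧ 2 * c.1 ≤ p.1 + 1 ∧ p.2 ≤ 2 * c.2 + 1 ∧ 2 * c.2 ≤ p.2 + 1 := by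
  simp only [Touches, abs_le]; omega

lemma touches_neg {p c : ℤ × ℤ} : Touches (-p) c ↔ Touches p (-c) := by
  simp only [touches_iff, Prod.fst_neg, Prod.snd_neg]; omega

def gridFrontier (A : Set (ℤ × ℤ)) : Set (ℤ × ℤ) :=
  {p | (∃ c ∈ A, Touches p c) ∧ ∃ c ∉ A, Touches p c}

variable {A : Set (ℤ × ℤ)}

lemma mem_gridFrontier_of_touches {m v : ℤ × ℤ} (hm : m ∈ gridFrontier A)
    (hmv : ∀ c, Touches m c → Touches v c) : v ∈ gridFrontier A := by
  obtain ⟨⟨c, hc, hmc⟩, ⟨d, hd, hmd⟩⟩ := hm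
  exact ⟨⟨c, hc, hmv c hmc⟩, ⟨d, hd, hmv d hmd⟩⟩

lemma mem_gridFrontier_or_neg_mem {m c d : ℤ × ℤ} (hc : c ∈ A ∩ -A) (hd : d ∉ A ∩ -A)
    (hmc : Touches m c) (hmd : Touches m d) : m ∈ gridFrontier A ∨ -m ∈ gridFrontier A := by
  by_cases hdA : d ∈ A
  · have hdA' : -d ∉ A := fun h => hd ⟨hdA, h⟩
    exact Or.inr ⟨⟨-c, hc.2, touches_neg.2 (by rwa [neg_neg])⟩,
      ⟨-d, hdA', touches_neg.2 (by rwa [neg_neg])⟩⟩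
  · exact Or.inl ⟨⟨c, hc.1, hmc⟩, ⟨d, hdA, hmd⟩⟩

variable (A) in
noncomputable def coreChain : ℤ × ℤ → ZMod 2 := (A ∩ -A).indicator 1

lemma coreChain_neg (c : ℤ × ℤ) : coreChain A (-c) = coreChain A c := by
  have hmem : -c ∈ A ∩ -A ↔ c ∈ A ∩ -A := by simp only [mem_inter_iff, mem_neg, neg_neg, and_comm]
  by_cases hc : c ∈ A ∩ -A
  · simp [coreChain, hc, hmem.2 hc]
  · simp [coreChain, hc, mt hmem.1 hc]

variable (A) in
/-- The red part of the mod 2 boundary of `A ∩ -A` on the edge with midpoint `m` between the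
squares `c` and `c'`. -/
noncomputable def redFlux (m c c' : ℤ × ℤ) : ZMod 2 :=
  (gridFrontier A).indicator (fun _ => coreChain A c' - coreChain A c) m

lemma coreChain_sub_eq_zero {m c c' : ℤ × ℤ} (hmc : Touches m c) (hmc' : Touches m c')
    (hm : m ∉ gridFrontier A) (hm' : -m ∉ gridFrontier A) : coreChain A c' - coreChain A c = 0 := by
  by_cases hc : c ∈ A ∩ -A <;> by_cases hc' : c' ∈ A ∩ -A
  · simp [coreChain, hc, hc']
  · exact (mem_gridFrontier_or_neg_mem hc hc' hmc hmc').elim (absurd · hm) (absurd · hm')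
  · exact (mem_gridFrontier_or_neg_mem hc' hc hmc' hmc).elim (absurd · hm) (absurd · hm')
  · simp [coreChain, hc, hc']

/-- As no vertex meets both a red and a blue edge, an edge is red exactly when the boundary of
`A ∩ -A` passes through it and its endpoint `v` lies on `gridFrontier A`. -/
lemma redFlux_eq_indicator_vertex (H : ∀ p ∈ gridFrontier A, -p ∉ gridFrontier A)
    {m v c c' : ℤ × ℤ} (hmc : Touches m c) (hmc' : Touches m c')
    (hmv : ∀ d, Touches m d → Touches v d) :
    redFlux A m c c' = (gridFrontier A).indicator (fun _ => coreChain A c' - coreChain A c) v := by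
  by_cases hv : v ∈ gridFrontier A
  · rw [indicator_of_mem hv]
    by_cases hm : m ∈ gridFrontier A
    · rw [redFlux, indicator_of_mem hm]
    · rw [redFlux, indicator_of_notMem hm, coreChain_sub_eq_zero hmc hmc' hm fun hm' =>
        H v hv (mem_gridFrontier_of_touches hm' fun d hd =>
          touches_neg.2 (hmv _ (touches_neg.1 hd)))]
  · rw [indicator_of_notMem hv, redFlux,
      indicator_of_notMem fun hm => hv (mem_gridFrontier_of_touches hm hmv)]

variable (A) in
noncomputable def redVert (p : ℤ × ℤ) : ZMod 2 :=
  redFlux A (2 * p.1 + 1, 2 * p.2) p (p.1 + 1, p.2)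

variable (A) in
noncomputable def redHoriz (p : ℤ × ℤ) : ZMod 2 :=
  redFlux A (2 * p.1, 2 * p.2 + 1) p (p.1, p.2 + 1)

lemma redVert_isCycle (H : ∀ p ∈ gridFrontier A, -p ∉ gridFrontier A) (i j : ℤ) :
    redVert A (i, j + 1) - redVert A (i, j) = redHoriz A (i + 1, j) - redHoriz A (i, j) := by
  simp only [redVert, redHoriz]
  rw [redFlux_eq_indicator_vertex (v := (2 * i + 1, 2 * j + 1)) H,
    redFlux_eq_indicator_vertex (v := (2 * i + 1, 2 * j + 1)) H,
    redFlux_eq_indicator_vertex (v := (2 * i + 1, 2 * j + 1)) H,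
    redFlux_eq_indicator_vertex (v := (2 * i + 1, 2 * j + 1)) H]
  · by_cases hv : (2 * i + 1, 2 * j + 1) ∈ gridFrontier A
    · simp only [indicator_of_mem hv]; abel
    · simp only [indicator_of_notMem hv, sub_self]
  all_goals intros; simp only [touches_iff] at *; omega

lemma mem_of_redFlux_ne_zero {m c c' : ℤ × ℤ} (h : redFlux A m c c' ≠ 0) : c ∈ A ∨ c' ∈ A := by
  have hsub : coreChain A c' - coreChain A c ≠ 0 := fun h0 => h (by simp [redFlux, h0])
  by_contra! hcc
  exact hsub (by simp [coreChain, indicator_of_notMem (fun h : c ∈ A ∩ -A => hcc.1 h.1),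
    indicator_of_notMem (fun h : c' ∈ A ∩ -A => hcc.2 h.1)])

lemma finite_support_redVert (hA : A.Finite) : (support (redVert A)).Finite :=
  (hA.union (hA.preimage (fun p _ q _ hpq => by simpa [Prod.ext_iff] using hpq))).subset
    fun p hp => mem_of_redFlux_ne_zero (m := (2 * p.1 + 1, 2 * p.2)) (c' := (p.1 + 1, p.2)) hp

lemma finite_support_redHoriz (hA : A.Finite) : (support (redHoriz A)).Finite :=
  (hA.union (hA.preimage (fun p _ q _ hpq => by simpa [Prod.ext_iff] using hpq))).subset
    fun p hp => mem_of_redFlux_ne_zero (m := (2 * p.1, 2 * p.2 + 1)) (c' := (p.1, p.2 + 1)) hp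

/-- Every boundary edge of `A ∩ -A` is red or blue, and the blue edges are the mirror images of
the red ones. -/
lemma coreChain_sub_eq_redVert_sub (H : ∀ p ∈ gridFrontier A, -p ∉ gridFrontier A) (i j : ℤ) :
    coreChain A (i + 1, j) - coreChain A (i, j) = redVert A (i, j) - redVert A (-i - 1, -j) := by
  have hmirror :
      redVert A (-i - 1, -j) = redFlux A (-(2 * i + 1, 2 * j)) (-(i + 1, j)) (-(i, j)) := by
    simp only [redVert, Prod.neg_mk]; congr 2 <;> ring
  have hmc : Touches (2 * i + 1, 2 * j) (i, j) := by simp only [touches_iff]; omega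
  have hmc' : Touches (2 * i + 1, 2 * j) (i + 1, j) := by simp only [touches_iff]; omega
  rw [hmirror, redVert, redFlux, redFlux, coreChain_neg, coreChain_neg]
  by_cases hm : ((2 * i + 1, 2 * j) : ℤ × ℤ) ∈ gridFrontier A
  · rw [indicator_of_mem hm, indicator_of_notMem (H _ hm), sub_zero]
  · rw [indicator_of_notMem hm]
    by_cases hm' : -((2 * i + 1, 2 * j) : ℤ × ℤ) ∈ gridFrontier A
    · rw [indicator_of_mem hm']; abel
    · rw [indicator_of_notMem hm', sub_zero, coreChain_sub_eq_zero hmc hmc' hm hm']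

theorem exists_mem_gridFrontier_neg_mem (hA : A.Finite) (h0 : (0, 0) ∈ A) :
    ∃ p ∈ gridFrontier A, -p ∈ gridFrontier A := by
  by_contra! H
  obtain ⟨N, hN⟩ := (hA.image fun c => |c.1|).bddAbove
  have hbound {c : ℤ × ℤ} (hc : c ∈ A) : -N ≤ c.1 ∧ c.1 ≤ N :=
    abs_le.1 (hN (mem_image_of_mem _ hc))
  set n := N.toNat + 1
  have hrow := finsum_row_eq_zero_of_isCycle (finite_support_redVert hA)
    (finite_support_redHoriz hA) (redVert_isCycle H) 0
  have hsupp : support (fun i => redVert A (i, 0)) ⊆ Ico (-(n : ℤ)) n := fun i hi => by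
    have := (mem_of_redFlux_ne_zero hi).imp hbound hbound
    simp only [mem_Ico]; omega
  rw [finsum_eq_sum_of_support_subset _ (s := Finset.Ico (-(n : ℤ)) n) (by simpa using hsupp),
    sum_Ico_neg_natCast_eq_sum_range] at hrow
  -- the crossings of the boundary of `A ∩ -A` by the ray from `(0, 0)` to the right
  have htel := Finset.sum_range_sub (fun k : ℕ => coreChain A (k, 0)) n
  simp only [Nat.cast_succ, coreChain_sub_eq_redVert_sub H, neg_zero] at htel
  have hn : coreChain A (n, 0) = 0 := indicator_of_notMem (fun h => by have := hbound h.1; omega) _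
  have hz : coreChain A (0, 0) = 1 := indicator_of_mem (show (0, 0) ∈ A ∩ -A by simpa) _
  simp only [CharTwo.sub_eq_add, Nat.cast_zero, hrow, hn, hz, zero_add] at htel
  exact zero_ne_one htel

end GridParity

section GridApproximation

variable {Γ : Set ℂ} {z : ℂ} {ε : ℝ}

/-- The grid of mesh `ε` centred at `z`, in the doubled coordinates of `Touches`. -/
noncomputable def gridPoint (z : ℂ) (ε : ℝ) (p : ℤ × ℤ) : ℂ :=
  z + (ε / 2 : ℝ) * (p.1 + p.2 * Complex.I)

@[simp] lemma gridPoint_re (p : ℤ × ℤ) : (gridPoint z ε p).re = z.re + ε / 2 * p.1 := by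
  simp [gridPoint]

@[simp] lemma gridPoint_im (p : ℤ × ℤ) : (gridPoint z ε p).im = z.im + ε / 2 * p.2 := by
  simp [gridPoint]

lemma gridPoint_neg (p : ℤ × ℤ) : gridPoint z ε (-p) = 2 * z - gridPoint z ε p := by
  simp only [gridPoint, Prod.fst_neg, Prod.snd_neg, Int.cast_neg]; ring

lemma dist_gridPoint_le (hε : 0 ≤ ε) {p c : ℤ × ℤ} (h : Touches p c) :
    dist (gridPoint z ε p) (gridPoint z ε (2 * c.1, 2 * c.2)) ≤ ε := by
  have h1 : |(p.1 : ℝ) - 2 * c.1| ≤ 1 := by exact_mod_cast h.1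
  have h2 : |(p.2 : ℝ) - 2 * c.2| ≤ 1 := by exact_mod_cast h.2
  calc dist (gridPoint z ε p) (gridPoint z ε (2 * c.1, 2 * c.2))
      ≤ ε / 2 * |(p.1 : ℝ) - 2 * c.1| + ε / 2 * |(p.2 : ℝ) - 2 * c.2| := by
        refine (Complex.dist_eq _ _ ▸ Complex.norm_le_abs_re_add_abs_im _).trans_eq ?_
        simp only [Complex.sub_re, Complex.sub_im, gridPoint_re, gridPoint_im, Int.cast_mul,
          Int.cast_ofNat, ← mul_sub, add_sub_add_left_eq_sub, abs_mul,
          abs_of_nonneg (by positivity : (0 : ℝ) ≤ ε / 2)]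
    _ ≤ ε / 2 * 1 + ε / 2 * 1 := by gcongr
    _ = ε := by ring

def nearCells (Γ : Set ℂ) (z : ℂ) (ε : ℝ) : Set (ℤ × ℤ) :=
  {c | ∃ w ∈ Γ, dist (gridPoint z ε (2 * c.1, 2 * c.2)) w ≤ ε}

lemma zero_mem_nearCells (hz : z ∈ Γ) (hε : 0 ≤ ε) : (0, 0) ∈ nearCells Γ z ε :=
  ⟨z, hz, by simpa [gridPoint] using hε⟩

lemma finite_nearCells (hΓ : IsBounded Γ) (hε : 0 < ε) : (nearCells Γ z ε).Finite := by
  obtain ⟨R, hR⟩ := hΓ.subset_closedBall z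
  set K : ℤ := ⌈(R + ε) / ε⌉
  refine ((finite_Icc (-K) K).prod (finite_Icc (-K) K)).subset fun c ⟨w, hw, hcw⟩ => ?_
  set u : ℂ := c.1 + c.2 * Complex.I
  have hdist : dist (gridPoint z ε (2 * c.1, 2 * c.2)) z = ε * ‖u‖ := by
    have hcentre : gridPoint z ε (2 * c.1, 2 * c.2) - z = ε * u := by
      simp only [gridPoint, u]; push_cast; ring
    rw [Complex.dist_eq, hcentre, norm_mul, Complex.norm_real, Real.norm_of_nonneg hε.le]
  have hu : ε * ‖u‖ ≤ R + ε := by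
    rw [← hdist]
    linarith [dist_triangle (gridPoint z ε (2 * c.1, 2 * c.2)) w z, mem_closedBall.1 (hR hw)]
  have hcoord {t : ℤ} (ht : |(t : ℝ)| ≤ ‖u‖) : t ∈ Icc (-K) K := by
    have : |(t : ℝ)| ≤ K := ((le_div_iff₀' hε).2 (by nlinarith)).trans (Int.le_ceil _)
    exact abs_le.1 (by exact_mod_cast this)
  exact ⟨hcoord (by simpa [u] using Complex.abs_re_le_norm u),
    hcoord (by simpa [u] using Complex.abs_im_le_norm u)⟩

lemma exists_mem_frontier_dist_gridPoint_le (hε : 0 ≤ ε) {p : ℤ × ℤ}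
    (hp : p ∈ gridFrontier (nearCells Γ z ε)) :
    ∃ y ∈ frontier Γ, dist (gridPoint z ε p) y ≤ 2 * ε := by
  obtain ⟨⟨c, ⟨w, hw, hcw⟩, hpc⟩, d, hd, hpd⟩ := hp
  have hx : gridPoint z ε p ∉ Γ := fun hx =>
    hd ⟨_, hx, dist_comm (gridPoint z ε p) _ ▸ dist_gridPoint_le hε hpd⟩
  obtain ⟨y, hy, hxy⟩ := exists_mem_frontier_dist_le hx hw
  refine ⟨y, hy, hxy.trans ?_⟩
  linarith [dist_triangle (gridPoint z ε p) (gridPoint z ε (2 * c.1, 2 * c.2)) w,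
    dist_gridPoint_le (z := z) hε hpc]

theorem exists_frontier_pair_dist_add_le (hΓ : IsBounded Γ) (hz : z ∈ Γ) (hε : 0 < ε) :
    ∃ y ∈ frontier Γ, ∃ y' ∈ frontier Γ, dist (y + y') (2 * z) ≤ 4 * ε := by
  obtain ⟨p, hp, hp'⟩ :=
    exists_mem_gridFrontier_neg_mem (finite_nearCells hΓ hε) (zero_mem_nearCells hz hε.le)
  obtain ⟨y, hy, hxy⟩ := exists_mem_frontier_dist_gridPoint_le hε.le hp
  obtain ⟨y', hy', hxy'⟩ := exists_mem_frontier_dist_gridPoint_le hε.le hp'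
  rw [gridPoint_neg] at hxy'
  set x := gridPoint z ε p
  refine ⟨y, hy, y', hy', ?_⟩
  calc dist (y + y') (2 * z) = dist (y + y') (x + (2 * z - x)) := by rw [add_sub_cancel]
    _ ≤ dist y x + dist y' (2 * z - x) := dist_add_add_le _ _ _ _
    _ ≤ 4 * ε := by rw [dist_comm y, dist_comm y']; linarith

end GridApproximation

theorem interior_point_two_mul_eq_add_of_distinct_frontier_general
    (Γ : Set ℂ) (hcomp : IsCompact Γ)
    (z : ℂ) (hz : z ∈ interior Γ) :
    ∃ z₁ ∈ frontier Γ, ∃ z₂ ∈ frontier Γ, z₁ ≠ z₂ ∧ z₁ + z₂ = 2 * z := by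
  have hfr : IsCompact (frontier Γ) :=
    hcomp.of_isClosed_subset isClosed_frontier hcomp.isClosed.frontier_subset
  have h2z : 2 * z ∈ frontier Γ + frontier Γ := by
    rw [← (hfr.add hfr).isClosed.closure_eq, Metric.mem_closure_iff]
    intro δ hδ
    obtain ⟨y, hy, y', hy', hdist⟩ := exists_frontier_pair_dist_add_le hcomp.isBounded
      (interior_subset hz) (by positivity : 0 < δ / 8)
    exact ⟨y + y', add_mem_add hy hy', by rw [dist_comm]; linarith⟩
  obtain ⟨z₁, h₁, z₂, h₂, hsum⟩ := h2z
  refine ⟨z₁, h₁, z₂, h₂, ?_, hsum⟩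
  rintro rfl
  have : z₁ = z := by linear_combination hsum / 2
  exact h₁.2 (this ▸ hz)

theorem interior_point_two_mul_eq_add_of_distinct_frontier
    (Γ : Set ℂ) (hne : Γ.Nonempty) (hcomp : IsCompact Γ)
    (z : ℂ) (hz : z ∈ interior Γ) :
    ∃ z₁ ∈ frontier Γ, ∃ z₂ ∈ frontier Γ, z₁ ≠ z₂ ∧ z₁ + z₂ = 2 * z :=
  interior_point_two_mul_eq_add_of_distinct_frontier_general Γ hcomp z hz
end

section
/- Let C be a conjugation on a complex Hilbert space H and let e, f ∈ H be unit vectors. Define X = e ⊗ (Cf) − f ⊗ (Ce). Then X satisfies CXC = −X*, and 1 − |⟨f, e⟩|² ≤ ‖X‖ ≤ 2. -/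
/-! For an involution `C` with `⟪C x, C y⟫ = ⟪y, x⟫` we get `⟪x, C y⟫ = ⟪y, C x⟫`, which gives
`CXC = -X*` after expanding both sides on rank-one operators. The upper bound is the triangle inequality
for the two rank-one terms, each of norm at most `1`. For the lower bound, evaluate `X` at the
unit vector `Cf`: `X (C f) = e - ⟪f, e⟫ • f`, the component of `e` orthogonal to `f`, whose
squared norm is `1 - |⟪e, f⟫|²`; as this number lies in `[0, 1]`, it is at most its square
root `‖X (C f)‖ ≤ ‖X‖`. -/

open scoped InnerProductSpace

namespace Conjugation

variable {H : Type*} [NormedAddCommGroup H] [InnerProductSpace ℂ H] {C : H → H}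

theorem norm_apply (hC : ∀ x y, ⟪C x, C y⟫_ℂ = ⟪y, x⟫_ℂ) (x : H) : ‖C x‖ = ‖x‖ := by
  rw [norm_eq_sqrt_re_inner (𝕜 := ℂ) (C x), norm_eq_sqrt_re_inner (𝕜 := ℂ) x, hC]

theorem inner_apply_right_comm (hinv : ∀ x, C (C x) = x)
    (hC : ∀ x y, ⟪C x, C y⟫_ℂ = ⟪y, x⟫_ℂ) (x y : H) : ⟪x, C y⟫_ℂ = ⟪y, C x⟫_ℂ := by
  conv_lhs => rw [← hinv x, hC]

end Conjugation

section SkewRankOne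

variable {H : Type*} [NormedAddCommGroup H] [InnerProductSpace ℂ H]

/-- The operator `e ⊗ (C f) - f ⊗ (C e)`. -/
noncomputable def skewRankOne (C : H → H) (e f : H) : H →L[ℂ] H :=
  (innerSL ℂ (C f)).smulRight e - (innerSL ℂ (C e)).smulRight f

variable {C : H → H}

theorem skewRankOne_apply (e f x : H) :
    skewRankOne C e f x = ⟪C f, x⟫_ℂ • e - ⟪C e, x⟫_ℂ • f := rfl

theorem conj_skewRankOne_conj [CompleteSpace H] (hinv : ∀ x, C (C x) = x)
    (hC : ∀ x y, ⟪C x, C y⟫_ℂ = ⟪y, x⟫_ℂ) (e f x : H) :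
    C (skewRankOne C e f (C x)) = -(skewRankOne C e f).adjoint x := by
  have hsymm := Conjugation.inner_apply_right_comm hinv hC
  refine ext_inner_left ℂ fun y => ?_
  rw [hsymm y, inner_neg_right, ContinuousLinearMap.adjoint_inner_right, skewRankOne_apply,
    skewRankOne_apply]
  simp only [inner_sub_left, inner_smul_left, inner_conj_symm]
  rw [hC x f, hC x e, hsymm e y, hsymm f y]
  ring

theorem norm_skewRankOne_le (hC : ∀ x y, ⟪C x, C y⟫_ℂ = ⟪y, x⟫_ℂ) (e f : H) :
    ‖skewRankOne C e f‖ ≤ 2 * (‖e‖ * ‖f‖) := by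
  have hnorm := Conjugation.norm_apply hC
  calc ‖skewRankOne C e f‖
      ≤ ‖(innerSL ℂ (C f)).smulRight e‖ + ‖(innerSL ℂ (C e)).smulRight f‖ := norm_sub_le _ _
    _ = 2 * (‖e‖ * ‖f‖) := by
      simp only [ContinuousLinearMap.norm_smulRight_apply, innerSL_apply_norm, hnorm]
      ring

theorem skewRankOne_apply_conj_right (hC : ∀ x y, ⟪C x, C y⟫_ℂ = ⟪y, x⟫_ℂ) {e f : H}
    (hf : ‖f‖ = 1) : skewRankOne C e f (C f) = e - ⟪f, e⟫_ℂ • f := by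
  rw [skewRankOne_apply, hC, hC, inner_self_eq_norm_sq_to_K, hf]
  simp

end SkewRankOne

theorem norm_sub_inner_smul_sq {E : Type*} [NormedAddCommGroup E] [InnerProductSpace ℂ E]
    {f : E} (hf : ‖f‖ = 1) (e : E) : ‖e - ⟪f, e⟫_ℂ • f‖ ^ 2 = ‖e‖ ^ 2 - ‖⟪e, f⟫_ℂ‖ ^ 2 := by
  rw [norm_sub_sq (𝕜 := ℂ), inner_smul_right, norm_smul, hf, ← inner_conj_symm e f,
    Complex.mul_conj, Complex.normSq_eq_norm_sq, Complex.norm_conj, RCLike.re_to_complex,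
    Complex.ofReal_re, ← inner_conj_symm f e, Complex.norm_conj]
  ring

theorem rankOne_skew_norm_estimate_general {H : Type*} [NormedAddCommGroup H]
    [InnerProductSpace ℂ H] [CompleteSpace H] (C : H → H)
    (hinv : ∀ x, C (C x) = x)
    (hC : ∀ x y, ⟪C x, C y⟫_ℂ = ⟪y, x⟫_ℂ)
    (e f : H) (he : ‖e‖ = 1) (hf : ‖f‖ = 1)
    (X : H →L[ℂ] H)
    (hXdef : X = (innerSL ℂ (C f)).smulRight e - (innerSL ℂ (C e)).smulRight f) :
    (∀ x, C (X (C x)) = -(ContinuousLinearMap.adjoint X) x) ∧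
    1 - ‖⟪e, f⟫_ℂ‖ ^ 2 ≤ ‖X‖ ∧ ‖X‖ ≤ 2 := by
  change X = skewRankOne C e f at hXdef
  subst hXdef
  have hXCf : ‖skewRankOne C e f (C f)‖ ^ 2 = 1 - ‖⟪e, f⟫_ℂ‖ ^ 2 := by
    rw [skewRankOne_apply_conj_right hC hf, norm_sub_inner_smul_sq hf, he, one_pow]
  have hle : ‖skewRankOne C e f (C f)‖ ≤ ‖skewRankOne C e f‖ := by
    simpa [Conjugation.norm_apply hC, hf] using (skewRankOne C e f).le_opNorm (C f)
  refine ⟨conj_skewRankOne_conj hinv hC e f, ?_, ?_⟩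
  · nlinarith [norm_nonneg (skewRankOne C e f (C f)), norm_nonneg ⟪e, f⟫_ℂ]
  · simpa [he, hf] using norm_skewRankOne_le hC e f

theorem rankOne_skew_norm_estimate {H : Type*} [NormedAddCommGroup H]
    [InnerProductSpace ℂ H] [CompleteSpace H] (C : H → H)
    (hadd : ∀ x y, C (x + y) = C x + C y)
    (hsmul : ∀ (a : ℂ) (x : H), C (a • x) = (starRingEnd ℂ a) • C x)
    (hinv : ∀ x, C (C x) = x)
    (hC : ∀ x y, ⟪C x, C y⟫_ℂ = ⟪y, x⟫_ℂ)
    (e f : H) (he : ‖e‖ = 1) (hf : ‖f‖ = 1)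
    (X : H →L[ℂ] H)
    (hXdef : X = (innerSL ℂ (C f)).smulRight e - (innerSL ℂ (C e)).smulRight f) :
    (∀ x, C (X (C x)) = -(ContinuousLinearMap.adjoint X) x) ∧
    1 - ‖⟪e, f⟫_ℂ‖ ^ 2 ≤ ‖X‖ ∧ ‖X‖ ≤ 2 :=
  rankOne_skew_norm_estimate_general C hinv hC e f he hf X hXdef
end

section
/- Let C be a conjugation on a complex Hilbert space H, T ∈ B(H) with C T C = −T*, and λ ∈ ℂ. Then T − λ is bounded below (i.e., there exists c > 0 with ‖(T − λ)x‖ ≥ c‖x‖ for all x) if and only if T + λ is surjective. Consequently σ_π(T) = −σ_δ(T), where σ_π is the approximate point spectrum and σ_δ(T) = {z : T − z is not surjective}. -/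
/-!
Skew-symmetry gives `C (T - λ) C = -(T + λ)†`, and `C` is an isometric bijection, so `T - λ` is
bounded below exactly when `(T + λ)†` is. Between Hilbert spaces an operator `A` is surjective iff
`A†` is bounded below: one direction is the open mapping theorem, the other holds because `A A†`
is then coercive, hence invertible.
-/

open scoped InnerProductSpace

open ContinuousLinearMap

def BoundedBelow {E F : Type*} [Norm E] [Norm F] (f : E → F) : Prop :=
  ∃ c > 0, ∀ x, c * ‖x‖ ≤ ‖f x‖

section BoundedBelow

variable {E F G : Type*} [Norm E] [Norm F] [Norm G]

theorem BoundedBelow.congr_norm {f : E → F} {g : E → G} (h : ∀ x, ‖f x‖ = ‖g x‖) :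
    BoundedBelow f ↔ BoundedBelow g := by
  simp only [BoundedBelow, h]

theorem boundedBelow_comp_iff {f : E → F} {e : G → E} (he : Function.Surjective e)
    (he_norm : ∀ x, ‖e x‖ = ‖x‖) : BoundedBelow (f ∘ e) ↔ BoundedBelow f := by
  refine exists_congr fun c ↦ and_congr_right fun _ ↦ ⟨fun h x ↦ ?_, fun h x ↦ ?_⟩
  · obtain ⟨y, rfl⟩ := he x
    simpa [he_norm] using h y
  · simpa [he_norm] using h (e x)

end BoundedBelow

section Adjoint

variable {𝕜 E F : Type*} [RCLike 𝕜] [NormedAddCommGroup E] [InnerProductSpace 𝕜 E]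
  [CompleteSpace E] [NormedAddCommGroup F] [InnerProductSpace 𝕜 F] [CompleteSpace F]

theorem ContinuousLinearMap.boundedBelow_adjoint_of_surjective {A : E →L[𝕜] F}
    (hA : Function.Surjective A) : BoundedBelow A.adjoint := by
  obtain ⟨M, hM, hpre⟩ := A.exists_preimage_norm_le hA
  refine ⟨M⁻¹, by positivity, fun u ↦ ?_⟩
  obtain ⟨x, rfl, hx⟩ := hpre u
  have : ‖A x‖ ^ 2 ≤ ‖A.adjoint (A x)‖ * (M * ‖A x‖) := calc
    ‖A x‖ ^ 2 = RCLike.re ⟪A.adjoint (A x), x⟫_𝕜 := by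
      rw [adjoint_inner_left, inner_self_eq_norm_sq]
    _ ≤ ‖A.adjoint (A x)‖ * ‖x‖ := (RCLike.re_le_norm _).trans (norm_inner_le_norm _ _)
    _ ≤ ‖A.adjoint (A x)‖ * (M * ‖A x‖) := by gcongr
  rcases (norm_nonneg (A x)).eq_or_lt with h0 | hpos
  · simp [← h0]
  · rw [inv_mul_le_iff₀ hM]
    nlinarith

theorem ContinuousLinearMap.surjective_of_boundedBelow_adjoint {A : E →L[𝕜] F}
    (hA : BoundedBelow A.adjoint) : Function.Surjective A := by
  obtain ⟨c, hc, hbound⟩ := hA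
  -- `A A†` is coercive, since `⟪A A† x, x⟫ = ‖A† x‖²`.
  have hunit : IsUnit (A ∘L A.adjoint) := by
    refine isUnit_of_forall_le_norm_inner_map _ (c := (c ^ 2).toNNReal)
      (Real.toNNReal_pos.mpr (by positivity)) fun x ↦ ?_
    rw [comp_apply, ← adjoint_inner_right, inner_self_eq_norm_sq_to_K, norm_pow,
      RCLike.norm_ofReal, abs_norm, Real.coe_toNNReal _ (sq_nonneg c), mul_comm, ← mul_pow]
    exact pow_le_pow_left₀ (by positivity) (hbound x) 2
  intro y
  obtain ⟨x, hx⟩ := (isUnit_iff_bijective.mp hunit).2 y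
  exact ⟨A.adjoint x, hx⟩

theorem ContinuousLinearMap.surjective_iff_boundedBelow_adjoint (A : E →L[𝕜] F) :
    Function.Surjective A ↔ BoundedBelow A.adjoint :=
  ⟨boundedBelow_adjoint_of_surjective, surjective_of_boundedBelow_adjoint⟩

end Adjoint

theorem norm_map_of_inner_map_map {𝕜 E : Type*} [RCLike 𝕜] [NormedAddCommGroup E]
    [InnerProductSpace 𝕜 E] {C : E → E} (hC : ∀ x y, ⟪C x, C y⟫_𝕜 = ⟪y, x⟫_𝕜) (x : E) :
    ‖C x‖ = ‖x‖ := by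
  have h := hC x x
  rw [inner_self_eq_norm_sq_to_K, inner_self_eq_norm_sq_to_K] at h
  exact (pow_left_inj₀ (norm_nonneg _) (norm_nonneg _) two_ne_zero).mp (mod_cast h)

theorem conj_sub_smul_one_conj {H : Type*} [NormedAddCommGroup H] [InnerProductSpace ℂ H]
    [CompleteSpace H] (C : H →ₗ⋆[ℂ] H) (hinv : ∀ x, C (C x) = x) (T : H →L[ℂ] H)
    (hT : ∀ x, C (T (C x)) = -T.adjoint x) (lam : ℂ) (x : H) :
    C ((T - lam • 1) (C x)) = -(T + lam • 1).adjoint x := by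
  simp only [sub_apply, add_apply, smul_apply, one_apply_eq_self, map_sub, map_add, map_smulₛₗ,
    adjoint_one, hT, hinv, neg_add_rev]
  abel

theorem bounded_below_iff_surjective_of_skew {H : Type*} [NormedAddCommGroup H]
    [InnerProductSpace ℂ H] [CompleteSpace H] (C : H → H)
    (hadd : ∀ x y, C (x + y) = C x + C y)
    (hsmul : ∀ (a : ℂ) (x : H), C (a • x) = (starRingEnd ℂ a) • C x)
    (hinv : ∀ x, C (C x) = x)
    (hC : ∀ x y, ⟪C x, C y⟫_ℂ = ⟪y, x⟫_ℂ)
    (T : H →L[ℂ] H)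
    (hT : ∀ x, C (T (C x)) = -(ContinuousLinearMap.adjoint T) x) :
    (∀ lam : ℂ,
      ((∃ c > 0, ∀ x : H, c * ‖x‖ ≤ ‖(T - lam • (1 : H →L[ℂ] H)) x‖) ↔
        Function.Surjective ⇑(T + lam • (1 : H →L[ℂ] H)))) ∧
    {z : ℂ | ¬ ∃ c > 0, ∀ x : H, c * ‖x‖ ≤ ‖(T - z • (1 : H →L[ℂ] H)) x‖}
      = -{z : ℂ | ¬ Function.Surjective ⇑(T - z • (1 : H →L[ℂ] H))} := by
  let Cₗ : H →ₗ⋆[ℂ] H := { toFun := C, map_add' := hadd, map_smul' := hsmul }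
  have hnorm : ∀ x, ‖C x‖ = ‖x‖ := norm_map_of_inner_map_map hC
  have hbdd_iff (lam : ℂ) : BoundedBelow ⇑(T - lam • 1) ↔ Function.Surjective ⇑(T + lam • 1) := by
    rw [surjective_iff_boundedBelow_adjoint,
      ← boundedBelow_comp_iff (Function.LeftInverse.surjective hinv) hnorm]
    refine BoundedBelow.congr_norm fun x ↦ ?_
    rw [Function.comp_apply, ← hnorm, ← norm_neg ((T + lam • 1).adjoint x)]
    exact congrArg norm (conj_sub_smul_one_conj Cₗ hinv T hT lam x)
  refine ⟨hbdd_iff, Set.ext fun z ↦ ?_⟩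
  rw [Set.mem_neg, Set.mem_ofPred_eq, Set.mem_ofPred_eq, neg_smul, sub_neg_eq_add]
  exact not_congr (hbdd_iff z)
end

section
/- Let C be a conjugation on a complex Hilbert space H and T ∈ B(H) with C T C = −T*. If z ∈ ℂ and e₁, e₂ are orthonormal vectors with T e₁ = z e₁ and T e₂ = z e₂, then the operator X = e₁ ⊗ (C e₂) − e₂ ⊗ (C e₁) is nonzero, satisfies C X C = −X*, and T X − X T = 2z X. -/
open scoped InnerProductSpace

theorem eigenvectors_give_eigenvector_of_ad {H : Type*} [NormedAddCommGroup H]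
    [InnerProductSpace ℂ H] [CompleteSpace H] (C : H → H)
    (hadd : ∀ x y, C (x + y) = C x + C y)
    (hsmul : ∀ (a : ℂ) (x : H), C (a • x) = (starRingEnd ℂ a) • C x)
    (hinv : ∀ x, C (C x) = x)
    (hC : ∀ x y, ⟪C x, C y⟫_ℂ = ⟪y, x⟫_ℂ)
    (T : H →L[ℂ] H)
    (hT : ∀ x, C (T (C x)) = -(ContinuousLinearMap.adjoint T) x)
    (z : ℂ) (e₁ e₂ : H) (he₁ : ‖e₁‖ = 1) (he₂ : ‖e₂‖ = 1)
    (horth : ⟪e₁, e₂⟫_ℂ = 0)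
    (hTe₁ : T e₁ = z • e₁) (hTe₂ : T e₂ = z • e₂)
    (X : H →L[ℂ] H)
    (hXdef : X = (innerSL ℂ (C e₂)).smulRight e₁ - (innerSL ℂ (C e₁)).smulRight e₂) :
    X ≠ 0 ∧
    (∀ x, C (X (C x)) = -(ContinuousLinearMap.adjoint X) x) ∧
    T * X - X * T = (2 * z) • X := by
  have hXapp : ∀ x, X x = ⟪C e₂, x⟫_ℂ • e₁ - ⟪C e₁, x⟫_ℂ • e₂ := by
    intro x; simp [hXdef]
  have hC1 : ∀ x y : H, ⟪C x, y⟫_ℂ = ⟪C y, x⟫_ℂ := by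
    intro x y
    calc ⟪C x, y⟫_ℂ = ⟪C x, C (C y)⟫_ℂ := by rw [hinv]
    _ = ⟪C y, x⟫_ℂ := hC _ _
  have hCsub : ∀ x y, C (x - y) = C x - C y := by
    intro x y
    have h1 : C (-y) = -C y := by
      have := hsmul (-1) y
      simpa using this
    rw [sub_eq_add_neg, hadd, h1, sub_eq_add_neg]
  have he₁' : ⟪e₁, e₁⟫_ℂ = 1 := by
    rw [inner_self_eq_norm_sq_to_K, he₁]; norm_num
  have he₂' : ⟪e₂, e₂⟫_ℂ = 1 := by
    rw [inner_self_eq_norm_sq_to_K, he₂]; norm_num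
  have horth' : ⟪e₂, e₁⟫_ℂ = 0 := by
    rw [← inner_conj_symm, horth]; simp
  have hadjX : ∀ x, ContinuousLinearMap.adjoint X x
      = ⟪e₁, x⟫_ℂ • C e₂ - ⟪e₂, x⟫_ℂ • C e₁ := by
    intro x
    apply ext_inner_right ℂ
    intro y
    rw [ContinuousLinearMap.adjoint_inner_left, hXapp]
    simp only [inner_sub_left, inner_sub_right, inner_smul_left, inner_smul_right,
      inner_conj_symm]
    rw [hC1 e₂ y, hC1 e₁ y]
    ring
  refine ⟨?_, ?_, ?_⟩
  · intro h
    have h2 : X (C e₂) = e₁ := by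
      rw [hXapp, hC, hC, he₂', horth']; simp
    rw [h] at h2
    simp only [ContinuousLinearMap.zero_apply] at h2
    rw [← h2] at he₁
    simp at he₁
  · intro x
    rw [hXapp, hadjX, hCsub]
    rw [hsmul, hsmul, hC, hC]
    simp only [inner_conj_symm]
    module
  · ext x
    have key : ∀ (e : H), T e = z • e → ⟪C e, T x⟫_ℂ = -z * ⟪C e, x⟫_ℂ := by
      intro e hTe
      have h2 := hT (C e)
      rw [hinv, hTe, hsmul] at h2
      have h1 : ContinuousLinearMap.adjoint T (C e) = (-(starRingEnd ℂ z)) • C e := by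
        simpa [neg_smul] using congrArg Neg.neg h2.symm
      rw [← ContinuousLinearMap.adjoint_inner_left, h1, inner_smul_left]
      simp only [map_neg, RingHom.id_apply, Complex.conj_conj]
    have k1 := key e₁ hTe₁
    have k2 := key e₂ hTe₂
    simp only [ContinuousLinearMap.sub_apply, ContinuousLinearMap.mul_apply,
      ContinuousLinearMap.smul_apply, hXapp, map_sub, map_smul, hTe₁, hTe₂, k1, k2]
    module
end

section
/- Let C be a conjugation on a complex Hilbert space H and T ∈ B(H) with C T C = −T*. Suppose z ∈ ℂ and f₁, f₂ are nonzero vectors with (T − z) f₁ = 0 and (T − z) f₂ = f₁. Then X = f₁ ⊗ (C f₂) − f₂ ⊗ (C f₁) satisfies T X − X T = 2z X. -/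
open scoped InnerProductSpace

theorem jordan_chain_gives_eigenvector_of_ad {H : Type*} [NormedAddCommGroup H]
    [InnerProductSpace ℂ H] [CompleteSpace H] (C : H → H)
    (hadd : ∀ x y, C (x + y) = C x + C y)
    (hsmul : ∀ (a : ℂ) (x : H), C (a • x) = (starRingEnd ℂ a) • C x)
    (hinv : ∀ x, C (C x) = x)
    (hC : ∀ x y, ⟪C x, C y⟫_ℂ = ⟪y, x⟫_ℂ)
    (T : H →L[ℂ] H)
    (hT : ∀ x, C (T (C x)) = -(ContinuousLinearMap.adjoint T) x)
    (z : ℂ) (f₁ f₂ : H) (hf₁ : f₁ ≠ 0) (hf₂ : f₂ ≠ 0)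
    (hTf₁ : T f₁ = z • f₁) (hTf₂ : T f₂ = z • f₂ + f₁)
    (X : H →L[ℂ] H)
    (hXdef : X = (innerSL ℂ (C f₂)).smulRight f₁ - (innerSL ℂ (C f₁)).smulRight f₂) :
    T * X - X * T = (2 * z) • X := by
  have hadj : ∀ f, (ContinuousLinearMap.adjoint T) (C f) = -C (T f) := by
    intro f
    have h := hT (C f)
    rw [hinv] at h
    rw [h, neg_neg]
  have h1 : ∀ x, ⟪C f₁, T x⟫_ℂ = -z * ⟪C f₁, x⟫_ℂ := by
    intro x
    rw [← ContinuousLinearMap.adjoint_inner_left, hadj, hTf₁, hsmul, inner_neg_left,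
      inner_smul_left]
    simp <;> ring
  have h2 : ∀ x, ⟪C f₂, T x⟫_ℂ = -z * ⟪C f₂, x⟫_ℂ - ⟪C f₁, x⟫_ℂ := by
    intro x
    rw [← ContinuousLinearMap.adjoint_inner_left, hadj, hTf₂, hadd, hsmul, inner_neg_left,
      inner_add_left, inner_smul_left]
    simp <;> ring
  ext x
  simp only [hXdef, ContinuousLinearMap.mul_apply, ContinuousLinearMap.sub_apply,
    ContinuousLinearMap.smul_apply, ContinuousLinearMap.smulRight_apply, innerSL_apply_apply,
    map_sub, map_smul, hTf₁, hTf₂, h1, h2, smul_sub, smul_smul]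
  module
end

section
/- Let C be a conjugation on a complex Hilbert space H. Define φ : B(H) → B(H ⊕ H) by φ(X) = X ⊕ (−C X* C) (block-diagonal operator). Then φ is an injective Lie algebra homomorphism (φ([X,Y]) = [φ(X), φ(Y)]) and is isometric (‖φ(X)‖ = ‖X‖). Moreover, each φ(X) is skew-symmetric with respect to the conjugation D on H ⊕ H given by D(x, y) = (C y, C x). -/
/-!
Write `Xᵗ = C X* C`, so that `φ X = X ⊕ (-Xᵗ)` is block diagonal. Since `C² = 1`, the map
`X ↦ Xᵗ` reverses products, hence `X ↦ -Xᵗ` is a Lie homomorphism; since `C` is isometric,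
`‖Xᵗ‖ ≤ ‖X*‖ = ‖X‖`, so `‖φ X‖ = max ‖X‖ ‖Xᵗ‖ = ‖X‖`. Conjugating `A ⊕ B` by `D` gives
`(C B C) ⊕ (C A C)`, which for `φ X` is `(-X*) ⊕ (C X C) = -(φ X)*`.
-/

open scoped InnerProductSpace

open ContinuousLinearMap

section BlockDiag

variable {𝕜 E F : Type*} [NontriviallyNormedField 𝕜]
  [NormedAddCommGroup E] [NormedSpace 𝕜 E] [NormedAddCommGroup F] [NormedSpace 𝕜 F]

noncomputable def blockDiag (A : E →L[𝕜] E) (B : F →L[𝕜] F) :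
    WithLp 2 (E × F) →L[𝕜] WithLp 2 (E × F) :=
  ((WithLp.prodContinuousLinearEquiv 2 𝕜 E F).symm : E × F →L[𝕜] WithLp 2 (E × F)).comp
    ((A.prodMap B).comp
      (WithLp.prodContinuousLinearEquiv 2 𝕜 E F : WithLp 2 (E × F) →L[𝕜] E × F))

@[simp]
theorem blockDiag_apply (A : E →L[𝕜] E) (B : F →L[𝕜] F) (p : WithLp 2 (E × F)) :
    blockDiag A B p = WithLp.toLp 2 (A p.fst, B p.snd) :=
  rfl

theorem blockDiag_mul (A A' : E →L[𝕜] E) (B B' : F →L[𝕜] F) :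
    blockDiag A B * blockDiag A' B' = blockDiag (A * A') (B * B') :=
  rfl

theorem blockDiag_sub (A A' : E →L[𝕜] E) (B B' : F →L[𝕜] F) :
    blockDiag (A - A') (B - B') = blockDiag A B - blockDiag A' B' :=
  rfl

theorem blockDiag_neg (A : E →L[𝕜] E) (B : F →L[𝕜] F) :
    blockDiag (-A) (-B) = -blockDiag A B :=
  rfl

theorem blockDiag_injective_left {A A' : E →L[𝕜] E} {B B' : F →L[𝕜] F}
    (h : blockDiag A B = blockDiag A' B') : A = A' := by
  ext x
  simpa using congrArg (fun T => (T (WithLp.toLp 2 (x, 0))).fst) h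

theorem norm_blockDiag (A : E →L[𝕜] E) (B : F →L[𝕜] F) :
    ‖blockDiag A B‖ = max ‖A‖ ‖B‖ := by
  set M := max ‖A‖ ‖B‖
  apply le_antisymm
  · refine opNorm_le_bound _ (by positivity) fun p => ?_
    have hA : ‖A p.fst‖ ≤ M * ‖p.fst‖ :=
      (A.le_opNorm _).trans (mul_le_mul_of_nonneg_right (le_max_left _ _) (norm_nonneg _))
    have hB : ‖B p.snd‖ ≤ M * ‖p.snd‖ :=
      (B.le_opNorm _).trans (mul_le_mul_of_nonneg_right (le_max_right _ _) (norm_nonneg _))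
    refine (sq_le_sq₀ (norm_nonneg _) (by positivity)).1 ?_
    rw [blockDiag_apply, WithLp.prod_norm_sq_eq_of_L2, mul_pow, WithLp.prod_norm_sq_eq_of_L2]
    simp only [WithLp.toLp_fst, WithLp.toLp_snd]
    nlinarith [pow_le_pow_left₀ (norm_nonneg _) hA 2, pow_le_pow_left₀ (norm_nonneg _) hB 2]
  · refine max_le (opNorm_le_bound _ (norm_nonneg _) fun x => ?_)
      (opNorm_le_bound _ (norm_nonneg _) fun y => ?_)
    · simpa using (blockDiag A B).le_opNorm (WithLp.toLp 2 (x, 0))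
    · simpa using (blockDiag A B).le_opNorm (WithLp.toLp 2 (0, y))

end BlockDiag

theorem adjoint_blockDiag {𝕜 E F : Type*} [RCLike 𝕜]
    [NormedAddCommGroup E] [InnerProductSpace 𝕜 E] [CompleteSpace E]
    [NormedAddCommGroup F] [InnerProductSpace 𝕜 F] [CompleteSpace F]
    (A : E →L[𝕜] E) (B : F →L[𝕜] F) :
    adjoint (blockDiag A B) = blockDiag (adjoint A) (adjoint B) := by
  refine ((eq_adjoint_iff _ _).2 fun p q => ?_).symm
  simp [WithLp.prod_inner_apply, adjoint_inner_left]

section Conjugation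

variable {H : Type*} [NormedAddCommGroup H]

section Normed

variable [NormedSpace ℂ H] {C : H →SL[starRingEnd ℂ] H}

theorem conj_comp_mul_comp_conj (hinv : ∀ x, C (C x) = x) (A B : H →L[ℂ] H) :
    C.comp ((A * B).comp C) = C.comp (A.comp C) * C.comp (B.comp C) := by
  ext x
  simp [hinv]

theorem conj_comp_conj_comp_comp_conj_comp_conj (hinv : ∀ x, C (C x) = x) (A : H →L[ℂ] H) :
    C.comp ((C.comp (A.comp C)).comp C) = A := by
  ext x
  simp [hinv]

variable (C) in
def swapConj (p : WithLp 2 (H × H)) : WithLp 2 (H × H) :=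
  WithLp.toLp 2 (C p.snd, C p.fst)

theorem swapConj_blockDiag_swapConj (A B : H →L[ℂ] H) (p : WithLp 2 (H × H)) :
    swapConj C (blockDiag A B (swapConj C p)) =
      blockDiag (C.comp (B.comp C)) (C.comp (A.comp C)) p :=
  rfl

end Normed

variable [InnerProductSpace ℂ H] {C : H →SL[starRingEnd ℂ] H}

theorem norm_conj_comp_comp_conj_le (hC : ∀ x y, ⟪C x, C y⟫_ℂ = ⟪y, x⟫_ℂ) (A : H →L[ℂ] H) :
    ‖C.comp (A.comp C)‖ ≤ ‖A‖ := by
  have norm_C : ∀ x, ‖C x‖ = ‖x‖ := fun x => by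
    rw [norm_eq_sqrt_re_inner (𝕜 := ℂ), norm_eq_sqrt_re_inner (𝕜 := ℂ) x, hC]
  refine opNorm_le_bound _ (norm_nonneg _) fun x => ?_
  simpa [norm_C] using A.le_opNorm (C x)

theorem adjoint_conj_comp_comp_conj [CompleteSpace H] (hinv : ∀ x, C (C x) = x)
    (hC : ∀ x y, ⟪C x, C y⟫_ℂ = ⟪y, x⟫_ℂ) (A : H →L[ℂ] H) :
    adjoint (C.comp (A.comp C)) = C.comp ((adjoint A).comp C) := by
  have inner_conj_left : ∀ u v, ⟪C u, v⟫_ℂ = ⟪C v, u⟫_ℂ := fun u v => by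
    rw [← hC u (C v), hinv]
  have inner_conj_right : ∀ u v, ⟪u, C v⟫_ℂ = ⟪v, C u⟫_ℂ := fun u v => by
    rw [← hC (C u) v, hinv]
  refine ((eq_adjoint_iff _ _).2 fun x y => ?_).symm
  simp only [comp_apply]
  rw [inner_conj_left, adjoint_inner_right, inner_conj_right]

end Conjugation

theorem phi_lie_embedding {H : Type*} [NormedAddCommGroup H]
    [InnerProductSpace ℂ H] [CompleteSpace H]
    (C : H →SL[starRingEnd ℂ] H)
    (hinv : ∀ x, C (C x) = x)
    (hC : ∀ x y, ⟪C x, C y⟫_ℂ = ⟪y, x⟫_ℂ)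
    (eL : WithLp 2 (H × H) ≃L[ℂ] H × H)
    (heL : eL = WithLp.prodContinuousLinearEquiv 2 ℂ H H)
    (φ : (H →L[ℂ] H) → (WithLp 2 (H × H) →L[ℂ] WithLp 2 (H × H)))
    (hφ : ∀ X : H →L[ℂ] H,
      φ X = (eL.symm : H × H →L[ℂ] WithLp 2 (H × H)).comp
        ((X.prodMap (-(C.comp ((ContinuousLinearMap.adjoint X).comp C)))).comp
          (eL : WithLp 2 (H × H) →L[ℂ] H × H)))
    (D : WithLp 2 (H × H) → WithLp 2 (H × H))
    (hD : ∀ p, D p = eL.symm (C (eL p).2, C (eL p).1)) :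
    (∀ X Y : H →L[ℂ] H, φ (X * Y - Y * X) = φ X * φ Y - φ Y * φ X) ∧
    Function.Injective φ ∧
    (∀ X : H →L[ℂ] H, ‖φ X‖ = ‖X‖) ∧
    (∀ (X : H →L[ℂ] H) (p : WithLp 2 (H × H)),
      D ((φ X) (D p)) = -(ContinuousLinearMap.adjoint (φ X)) p) := by
  subst heL
  obtain rfl : φ = fun X => blockDiag X (-(C.comp ((adjoint X).comp C))) := funext hφ
  obtain rfl : D = swapConj C := funext hD
  beta_reduce
  refine ⟨fun X Y => ?_, fun X Y h => blockDiag_injective_left h, fun X => ?_, fun X p => ?_⟩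
  · have transpose_mul : ∀ A B : H →L[ℂ] H, C.comp ((adjoint (A * B)).comp C) =
        C.comp ((adjoint B).comp C) * C.comp ((adjoint A).comp C) := fun A B => by
      rw [mul_def, adjoint_comp, ← conj_comp_mul_comp_conj hinv, mul_def]
    rw [blockDiag_mul, blockDiag_mul, ← blockDiag_sub, map_sub, sub_comp, comp_sub,
      transpose_mul, transpose_mul, neg_mul_neg, neg_mul_neg, neg_sub]
  · rw [norm_blockDiag, norm_neg, max_eq_left]
    exact (norm_conj_comp_comp_conj_le hC _).trans (adjoint.norm_map X).le
  · rw [swapConj_blockDiag_swapConj, ← neg_apply, adjoint_blockDiag, map_neg,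
      adjoint_conj_comp_comp_conj hinv hC, adjoint_adjoint, ← blockDiag_neg, neg_comp, comp_neg,
      conj_comp_conj_comp_comp_conj_comp_conj hinv, neg_neg]
end

section
/- Let C be a conjugation on a complex Hilbert space H and T ∈ B(H) with C T C = −T*. If λ and μ are distinct points of the approximate point spectrum of T, then λ + μ belongs to the approximate point spectrum of the operator ad_T : O_C → O_C, ad_T(X) = TX − XT, acting on the Banach space O_C = {X ∈ B(H) : C X C = −X*} with the operator norm. -/
open scoped InnerProductSpace
open ContinuousLinearMap

private lemma exists_unit_vec {H : Type*} [NormedAddCommGroup H] [InnerProductSpace ℂ H]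
    (T : H →L[ℂ] H) (lam : ℂ)
    (h : ¬ ∃ c > 0, ∀ x : H, c * ‖x‖ ≤ ‖T x - lam • x‖) {ε : ℝ} (hε : 0 < ε) :
    ∃ u : H, ‖u‖ = 1 ∧ ‖T u - lam • u‖ < ε := by
  push_neg at h
  obtain ⟨x, hx⟩ := h ε hε
  have hx0 : x ≠ 0 := by rintro rfl; simp at hx
  have hn : (0:ℝ) < ‖x‖ := norm_pos_iff.mpr hx0
  refine ⟨(‖x‖:ℂ)⁻¹ • x, ?_, ?_⟩
  · simp [norm_smul, inv_mul_cancel₀ hn.ne']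
  · have heq : T ((‖x‖:ℂ)⁻¹ • x) - lam • ((‖x‖:ℂ)⁻¹ • x) = (‖x‖:ℂ)⁻¹ • (T x - lam • x) := by
      rw [map_smul, smul_sub, smul_comm]
    rw [heq, norm_smul]
    have h2 : ‖((‖x‖:ℂ))⁻¹‖ = ‖x‖⁻¹ := by simp
    rw [h2]
    calc ‖x‖⁻¹ * ‖T x - lam • x‖ < ‖x‖⁻¹ * (ε * ‖x‖) :=
          mul_lt_mul_of_pos_left hx (inv_pos.mpr hn)
      _ = ε := by field_simp

theorem sum_of_approx_spectrum_in_approx_spectrum_of_ad {H : Type*}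
    [NormedAddCommGroup H] [InnerProductSpace ℂ H] [CompleteSpace H] (C : H → H)
    (hadd : ∀ x y, C (x + y) = C x + C y)
    (hsmul : ∀ (a : ℂ) (x : H), C (a • x) = (starRingEnd ℂ a) • C x)
    (hinv : ∀ x, C (C x) = x)
    (hC : ∀ x y, ⟪C x, C y⟫_ℂ = ⟪y, x⟫_ℂ)
    (T : H →L[ℂ] H)
    (hT : ∀ x, C (T (C x)) = -(ContinuousLinearMap.adjoint T) x)
    (lam mu : ℂ) (hne : lam ≠ mu)
    (hlam : ¬ ∃ c > 0, ∀ x : H, c * ‖x‖ ≤ ‖T x - lam • x‖)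
    (hmu : ¬ ∃ c > 0, ∀ x : H, c * ‖x‖ ≤ ‖T x - mu • x‖) :
    ¬ ∃ c > 0, ∀ X : H →L[ℂ] H,
      (∀ x, C (X (C x)) = -(ContinuousLinearMap.adjoint X) x) →
      c * ‖X‖ ≤ ‖T * X - X * T - (lam + mu) • X‖ := by
  rintro ⟨c, hc, hbound⟩
  -- basic facts about C
  have Cneg : ∀ x, C (-x) = - C x := by
    intro x
    have := hsmul (-1) x
    simpa using this
  have Csub : ∀ x y, C (x - y) = C x - C y := by
    intro x y
    rw [sub_eq_add_neg, hadd, Cneg, sub_eq_add_neg]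
  have Cnorm : ∀ x, ‖C x‖ = ‖x‖ := by
    intro x
    have h1 := hC x x
    rw [inner_self_eq_norm_sq_to_K, inner_self_eq_norm_sq_to_K] at h1
    have h2 : ‖C x‖ ^ 2 = ‖x‖ ^ 2 := by exact_mod_cast h1
    nlinarith [norm_nonneg (C x), norm_nonneg x]
  have CinnerL : ∀ a b : H, ⟪C a, b⟫_ℂ = ⟪C b, a⟫_ℂ := by
    intro a b
    conv_lhs => rw [← hinv b]
    rw [hC]
  have hskew : ∀ a x : H, ⟪C a, T x⟫_ℂ = -⟪C (T a), x⟫_ℂ := by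
    intro a x
    rw [CinnerL a (T x)]
    have h1 : C (T x) = - (ContinuousLinearMap.adjoint T) (C x) := by
      conv_lhs => rw [← hinv x]
      exact hT (C x)
    rw [h1, inner_neg_left, ContinuousLinearMap.adjoint_inner_left, CinnerL x (T a)]
  -- constants
  set δ : ℝ := ‖lam - mu‖ with hδdef
  have hδ : 0 < δ := by
    simp only [hδdef, norm_pos_iff, sub_ne_zero]
    exact hne
  set M : ℝ := ‖T‖ + ‖lam‖ with hMdef
  have hM : 0 ≤ M := by positivity
  set K : ℝ := 2 + 4 * M / c + 4 * δ / c with hKdef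
  have hK : 0 < K := by positivity
  set ε : ℝ := δ / (2 * K) with hεdef
  have hε : 0 < ε := by positivity
  -- approximate eigenvectors
  obtain ⟨u, hu1, hu⟩ := exists_unit_vec T lam hlam hε
  obtain ⟨v, hv1, hv⟩ := exists_unit_vec T mu hmu hε
  set eu : H := T u - lam • u with heudef
  set ev : H := T v - mu • v with hevdef
  -- the test operator
  set X : H →L[ℂ] H := (innerSL ℂ (C v)).smulRight u - (innerSL ℂ (C u)).smulRight v with hXdef
  have hXapp : ∀ x, X x = ⟪C v, x⟫_ℂ • u - ⟪C u, x⟫_ℂ • v := by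
    intro x; simp [hXdef]
  have hXadj : ContinuousLinearMap.adjoint X
      = (innerSL ℂ u).smulRight (C v) - (innerSL ℂ v).smulRight (C u) := by
    symm
    rw [ContinuousLinearMap.eq_adjoint_iff]
    intro x y
    simp [hXdef, inner_sub_left, inner_sub_right, inner_smul_left, inner_smul_right,
      inner_conj_symm]
    ring
  have hXC : ∀ x, C (X (C x)) = -(ContinuousLinearMap.adjoint X) x := by
    intro x
    have h1 : X (C x) = ⟪x, v⟫_ℂ • u - ⟪x, u⟫_ℂ • v := by
      rw [hXapp, hC, hC]
    rw [h1, Csub, hsmul, hsmul, hXadj]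
    simp [inner_conj_symm]
  -- the difference operator
  set D : H →L[ℂ] H := (innerSL ℂ (C v)).smulRight eu - (innerSL ℂ (C u)).smulRight ev
      + (innerSL ℂ (C ev)).smulRight u - (innerSL ℂ (C eu)).smulRight v with hDdef
  have hinTv : ∀ x, ⟪C v, T x⟫_ℂ = -⟪C ev, x⟫_ℂ - mu * ⟪C v, x⟫_ℂ := by
    intro x
    rw [hskew v x]
    have h2 : C (T v) = C ev + (starRingEnd ℂ mu) • C v := by
      rw [show T v = ev + mu • v by rw [hevdef]; abel, hadd, hsmul]
    rw [h2, inner_add_left, inner_smul_left]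
    simp only [RingHom.id_apply, starRingEnd_self_apply]
    ring
  have hinTu : ∀ x, ⟪C u, T x⟫_ℂ = -⟪C eu, x⟫_ℂ - lam * ⟪C u, x⟫_ℂ := by
    intro x
    rw [hskew u x]
    have h2 : C (T u) = C eu + (starRingEnd ℂ lam) • C u := by
      rw [show T u = eu + lam • u by rw [heudef]; abel, hadd, hsmul]
    rw [h2, inner_add_left, inner_smul_left]
    simp only [RingHom.id_apply, starRingEnd_self_apply]
    ring
  have hD : T * X - X * T - (lam + mu) • X = D := by
    ext x
    have lhs : (T * X - X * T - (lam + mu) • X) x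
        = ⟪C v, x⟫_ℂ • T u - ⟪C u, x⟫_ℂ • T v
          - (⟪C v, T x⟫_ℂ • u - ⟪C u, T x⟫_ℂ • v)
          - (lam + mu) • (⟪C v, x⟫_ℂ • u - ⟪C u, x⟫_ℂ • v) := by
      simp only [ContinuousLinearMap.sub_apply, ContinuousLinearMap.mul_apply,
        ContinuousLinearMap.smul_apply, hXapp, map_sub, map_smul]
    rw [lhs, hinTv, hinTu]
    have rhs : D x = ⟪C v, x⟫_ℂ • eu - ⟪C u, x⟫_ℂ • ev + ⟪C ev, x⟫_ℂ • u - ⟪C eu, x⟫_ℂ • v := by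
      simp [hDdef]
    rw [rhs, heudef, hevdef]
    module
  -- norm bound on D
  have hDnorm : ‖T * X - X * T - (lam + mu) • X‖ ≤ 2 * (‖eu‖ + ‖ev‖) := by
    rw [hD]
    refine ContinuousLinearMap.opNorm_le_bound _ (by positivity) (fun x => ?_)
    have happ : D x = ⟪C v, x⟫_ℂ • eu - ⟪C u, x⟫_ℂ • ev + ⟪C ev, x⟫_ℂ • u - ⟪C eu, x⟫_ℂ • v := by
      simp [hDdef]
    rw [happ]
    have b1 : ‖⟪C v, x⟫_ℂ • eu‖ ≤ ‖eu‖ * ‖x‖ := by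
      rw [norm_smul]
      calc ‖⟪C v, x⟫_ℂ‖ * ‖eu‖ ≤ (‖C v‖ * ‖x‖) * ‖eu‖ :=
            mul_le_mul_of_nonneg_right (norm_inner_le_norm _ _) (norm_nonneg _)
        _ = ‖eu‖ * ‖x‖ := by rw [Cnorm, hv1]; ring
    have b2 : ‖⟪C u, x⟫_ℂ • ev‖ ≤ ‖ev‖ * ‖x‖ := by
      rw [norm_smul]
      calc ‖⟪C u, x⟫_ℂ‖ * ‖ev‖ ≤ (‖C u‖ * ‖x‖) * ‖ev‖ :=
            mul_le_mul_of_nonneg_right (norm_inner_le_norm _ _) (norm_nonneg _)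
        _ = ‖ev‖ * ‖x‖ := by rw [Cnorm, hu1]; ring
    have b3 : ‖⟪C ev, x⟫_ℂ • u‖ ≤ ‖ev‖ * ‖x‖ := by
      rw [norm_smul, hu1, mul_one]
      calc ‖⟪C ev, x⟫_ℂ‖ ≤ ‖C ev‖ * ‖x‖ := norm_inner_le_norm _ _
        _ = ‖ev‖ * ‖x‖ := by rw [Cnorm]
    have b4 : ‖⟪C eu, x⟫_ℂ • v‖ ≤ ‖eu‖ * ‖x‖ := by
      rw [norm_smul, hv1, mul_one]
      calc ‖⟪C eu, x⟫_ℂ‖ ≤ ‖C eu‖ * ‖x‖ := norm_inner_le_norm _ _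
        _ = ‖eu‖ * ‖x‖ := by rw [Cnorm]
    calc ‖⟪C v, x⟫_ℂ • eu - ⟪C u, x⟫_ℂ • ev + ⟪C ev, x⟫_ℂ • u - ⟪C eu, x⟫_ℂ • v‖
        ≤ ‖⟪C v, x⟫_ℂ • eu - ⟪C u, x⟫_ℂ • ev + ⟪C ev, x⟫_ℂ • u‖ + ‖⟪C eu, x⟫_ℂ • v‖ :=
          norm_sub_le _ _
      _ ≤ (‖⟪C v, x⟫_ℂ • eu - ⟪C u, x⟫_ℂ • ev‖ + ‖⟪C ev, x⟫_ℂ • u‖) + ‖⟪C eu, x⟫_ℂ • v‖ := by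
          gcongr; exact norm_add_le _ _
      _ ≤ ((‖⟪C v, x⟫_ℂ • eu‖ + ‖⟪C u, x⟫_ℂ • ev‖) + ‖⟪C ev, x⟫_ℂ • u‖) + ‖⟪C eu, x⟫_ℂ • v‖ := by
          gcongr; exact norm_sub_le _ _
      _ ≤ ((‖eu‖ * ‖x‖ + ‖ev‖ * ‖x‖) + ‖ev‖ * ‖x‖) + ‖eu‖ * ‖x‖ := by
          gcongr
      _ = 2 * (‖eu‖ + ‖ev‖) * ‖x‖ := by ring
  -- upper bound on ‖X‖
  have hXle : ‖X‖ ≤ 4 * ε / c := by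
    have h1 := hbound X hXC
    have h2 : c * ‖X‖ ≤ 4 * ε := by
      calc c * ‖X‖ ≤ ‖T * X - X * T - (lam + mu) • X‖ := h1
        _ ≤ 2 * (‖eu‖ + ‖ev‖) := hDnorm
        _ ≤ 4 * ε := by nlinarith
    rw [le_div_iff₀ hc]
    linarith
  -- lower bound analysis: u is nearly parallel to v
  set α : ℂ := ⟪v, u⟫_ℂ with hαdef
  set w : H := u - α • v with hwdef
  have hXCv : X (C v) = w := by
    rw [hXapp, hC, hC, hwdef, hαdef]
    have : ⟪v, v⟫_ℂ = 1 := by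
      rw [inner_self_eq_norm_sq_to_K, hv1]; norm_num
    rw [this, one_smul]
  have hwle : ‖w‖ ≤ 4 * ε / c := by
    calc ‖w‖ = ‖X (C v)‖ := by rw [hXCv]
      _ ≤ ‖X‖ * ‖C v‖ := X.le_opNorm _
      _ = ‖X‖ := by rw [Cnorm, hv1, mul_one]
      _ ≤ 4 * ε / c := hXle
  have hα1 : ‖α‖ ≤ 1 := by
    calc ‖α‖ ≤ ‖v‖ * ‖u‖ := norm_inner_le_norm _ _
      _ = 1 := by rw [hu1, hv1, mul_one]
  have h1α : 1 ≤ ‖α‖ + ‖w‖ := by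
    have : u = α • v + w := by rw [hwdef]; abel
    calc (1:ℝ) = ‖u‖ := hu1.symm
      _ = ‖α • v + w‖ := by rw [← this]
      _ ≤ ‖α • v‖ + ‖w‖ := norm_add_le _ _
      _ = ‖α‖ + ‖w‖ := by rw [norm_smul, hv1, mul_one]
  -- key estimate
  have hkeyeq : (α * (mu - lam)) • v = eu - α • ev - (T w - lam • w) := by
    have hu' : u = α • v + w := by rw [hwdef]; abel
    rw [heudef, hevdef, hu', map_add, map_smul]
    module
  have hkey : ‖α‖ * δ ≤ 2 * ε + M * ‖w‖ := by
    have h1 : ‖α‖ * δ = ‖(α * (mu - lam)) • v‖ := by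
      rw [norm_smul, hv1, mul_one, norm_mul, hδdef, norm_sub_rev]
    rw [h1, hkeyeq]
    have hTw : ‖T w - lam • w‖ ≤ M * ‖w‖ := by
      calc ‖T w - lam • w‖ ≤ ‖T w‖ + ‖lam • w‖ := norm_sub_le _ _
        _ ≤ ‖T‖ * ‖w‖ + ‖lam‖ * ‖w‖ := by
            gcongr
            · exact T.le_opNorm w
            · rw [norm_smul]
        _ = M * ‖w‖ := by rw [hMdef]; ring
    calc ‖eu - α • ev - (T w - lam • w)‖
        ≤ ‖eu - α • ev‖ + ‖T w - lam • w‖ := norm_sub_le _ _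
      _ ≤ (‖eu‖ + ‖α • ev‖) + ‖T w - lam • w‖ := by gcongr; exact norm_sub_le _ _
      _ ≤ (ε + ‖ev‖) + M * ‖w‖ := by
          have hb1 : ‖α • ev‖ ≤ ‖ev‖ := by
            rw [norm_smul]
            calc ‖α‖ * ‖ev‖ ≤ 1 * ‖ev‖ := by gcongr
              _ = ‖ev‖ := one_mul _
          linarith [hu.le]
      _ ≤ 2 * ε + M * ‖w‖ := by linarith [hv.le]
  -- derive the contradiction
  have hεK : ε * K = δ / 2 := by
    rw [hεdef]
    field_simp
  have hfinal : δ ≤ ε * K := by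
    have e1 : δ * (1 - ‖w‖) ≤ δ * ‖α‖ := by
      apply mul_le_mul_of_nonneg_left _ hδ.le
      linarith
    have e2 : δ * ‖w‖ ≤ δ * (4 * ε / c) := mul_le_mul_of_nonneg_left hwle hδ.le
    have e3 : M * ‖w‖ ≤ M * (4 * ε / c) := mul_le_mul_of_nonneg_left hwle hM
    have e4 : δ * ‖α‖ ≤ 2 * ε + M * (4 * ε / c) := by
      calc δ * ‖α‖ = ‖α‖ * δ := mul_comm _ _
        _ ≤ 2 * ε + M * ‖w‖ := hkey
        _ ≤ 2 * ε + M * (4 * ε / c) := by linarith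
    have e5 : δ * 1 ≤ δ * (‖α‖ + ‖w‖) := mul_le_mul_of_nonneg_left h1α hδ.le
    rw [mul_one, mul_add] at e5
    have expand : ε * K = 2 * ε + M * (4 * ε / c) + δ * (4 * ε / c) := by
      rw [hKdef]; ring
    rw [expand]
    linarith
  rw [hεK] at hfinal
  linarith
end
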